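/- arXiv:math/0305144 — 4 statements merged into one kernel-verified Lean document; each statement's English description precedes it below -/
import Mathlib

section
/- Let (L, {α}, L^∨, {α^∨}) be a rank-n root datum of semisimple rank one. If the map ⟨α^∨, ·⟩ : L → ℤ takes only even values, then L decomposes as the direct sum of the kernel of ⟨α^∨, ·⟩ and the subgroup generated by α. -/
/-- The linear functional `⟨α^∨, ·⟩ : L → ℤ` on the lattice `L = ℤ^n` given by pairing
with a fixed covector `αv`. -/
noncomputable def corootPairing (n : ℕ) (αv : Fin n → ℤ) : (Fin n → ℤ) →ₗ[ℤ] ℤ where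
  toFun x := dotProduct αv x
  map_add' x y := by simp [dotProduct, mul_add, Finset.sum_add_distrib]
  map_smul' c x := by
    simp [dotProduct, Finset.mul_sum, mul_comm, mul_left_comm]

theorem LinearMap.isCompl_ker_span_singleton_of_dvd {R M : Type*} [CommRing R] [NoZeroDivisors R]
    [AddCommGroup M] [Module R M] (f : M →ₗ[R] R) {a : M} (ha : f a ≠ 0)
    (hdvd : ∀ x, f a ∣ f x) :
    IsCompl (LinearMap.ker f) (Submodule.span R {a}) := by
  constructor
  · rw [Submodule.disjoint_def]
    rintro _ hker hspan
    obtain ⟨c, rfl⟩ := Submodule.mem_span_singleton.mp hspan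
    rw [LinearMap.mem_ker, map_smul, smul_eq_mul, mul_eq_zero] at hker
    rw [hker.resolve_right ha, zero_smul]
  · rw [codisjoint_iff, eq_top_iff]
    rintro x -
    obtain ⟨k, hk⟩ := hdvd x
    have hker : x - k • a ∈ LinearMap.ker f := by
      rw [LinearMap.mem_ker, map_sub, map_smul, smul_eq_mul, hk, mul_comm, sub_self]
    rw [← sub_add_cancel x (k • a)]
    exact Submodule.add_mem_sup hker (Submodule.smul_mem _ k (Submodule.mem_span_singleton_self a))

/-- If, in a rank-`n` root datum of semisimple rank one with `⟨α^∨, α⟩ = 2`, the map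
`⟨α^∨, ·⟩ : L → ℤ` takes only even values, then `L` is the direct sum of the kernel of
`⟨α^∨, ·⟩` and the subgroup generated by `α`. -/
theorem stmt_5 (n : ℕ) (α αv : Fin n → ℤ)
    (h2 : dotProduct αv α = 2) (heven : ∀ x : Fin n → ℤ, 2 ∣ dotProduct αv x) :
    IsCompl (LinearMap.ker (corootPairing n αv)) (Submodule.span ℤ {α}) := by
  have hα : corootPairing n αv α = 2 := h2
  exact (corootPairing n αv).isCompl_ker_span_singleton_of_dvd (hα ▸ two_ne_zero) (hα ▸ heven)
end

section
/- Let Λ ≅ ℤ with generator α^∨ (written ℓ_a for a ∈ ℤ), and consider ℚ[Λ] ⊗ ℚ[x,t]. Fix integers d ≥ 1 and m. Then the element f_{m,d} = ∑_{m ≤ a < b ≤ m+d} C_{ab} (ℓ_b − ℓ_a) ⊗ ((a+b)x − t)^{d−1}, where C_{ab} = (−1)^{a−b}(a−b) C(d, a−m) C(d, b−m), equals (−1)^d d! (1 − α^∨)^d ℓ_m ⊗ x^{d−1}; in particular f_{m,d} lies in the kernel of ∂/∂t. -/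
open MvPolynomial

/-- The group algebra `ℚ[Λ]` of the free abelian group `Λ ≅ ℤ` (written multiplicatively). -/
abbrev GrpAlg : Type := MonoidAlgebra ℚ (Multiplicative ℤ)

/-- The lattice element `ℓ_a ∈ ℚ[Λ]`, `a ∈ ℤ`; in particular `α^∨ = ℓ_1` is the generator. -/
noncomputable def ell (a : ℤ) : GrpAlg := MonoidAlgebra.single (Multiplicative.ofAdd a) 1

/-- The ring `ℚ[Λ] ⊗ ℚ[x,t]`, modelled as polynomials in two variables `x = X 0`,
`t = X 1` with coefficients in the group algebra `ℚ[Λ]`. -/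
abbrev TensAlg : Type := MvPolynomial (Fin 2) GrpAlg

/-- The element `ℓ_a ⊗ 1` of `ℚ[Λ] ⊗ ℚ[x,t]`. -/
noncomputable def Lc (a : ℤ) : TensAlg := MvPolynomial.C (ell a)

/-- The element `f_{m,d} = ∑_{m ≤ a < b ≤ m+d} C_{ab} (ℓ_b - ℓ_a) ⊗ ((a+b)x - t)^{d-1}`
with `C_{ab} = (-1)^{a-b} (a-b) C(d, a-m) C(d, b-m)`. -/
noncomputable def fmd (m : ℤ) (d : ℕ) : TensAlg :=
  ∑ a ∈ Finset.Icc m (m + d), ∑ b ∈ Finset.Icc m (m + d),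
    if a < b then
      ((-1 : ℚ) ^ (b - a).toNat * ((a : ℚ) - (b : ℚ)) *
          (d.choose (a - m).toNat : ℚ) * (d.choose (b - m).toNat : ℚ)) •
        ((Lc b - Lc a) * (((a + b : ℤ) : TensAlg) * X 0 - X 1) ^ (d - 1))
    else 0

open Finset

noncomputable def Ssum (d k : ℕ) : ℚ :=
  ∑ i ∈ Finset.range (d+1), (-1:ℚ)^i * d.choose i * (i:ℚ)^k

lemma Ssum_zero (d : ℕ) (hd : 1 ≤ d) : Ssum d 0 = 0 := by
  have h := Int.alternating_sum_range_choose (n := d)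
  rw [if_neg (by omega)] at h
  have : ((∑ i ∈ range (d + 1), (-1:ℤ) ^ i * ↑(d.choose i) : ℤ) : ℚ) = 0 := by rw [h]; simp
  push_cast at this
  simpa [Ssum] using this

lemma Ssum_rec (d k : ℕ) (hd : 1 ≤ d) (hk : 1 ≤ k) :
    Ssum d k = -(d:ℚ) * ∑ l ∈ Finset.range k, ((k-1).choose l : ℚ) * Ssum (d-1) l := by
  have hd' : d - 1 + 1 = d := by omega
  have hk' : k - 1 + 1 = k := by omega
  calc Ssum d k = ∑ j ∈ range d, (-1:ℚ)^(j+1) * d.choose (j+1) * ((j:ℚ)+1)^k := by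
        rw [Ssum, Finset.sum_range_succ']
        simp only [zero_pow (by omega : k ≠ 0), Nat.cast_zero, mul_zero, add_zero]
        exact Finset.sum_congr rfl (by intros; push_cast; ring)
    _ = ∑ j ∈ range d, ∑ l ∈ range k, (-1:ℚ)^(j+1) * (d:ℚ) * (d-1).choose j * ((k-1).choose l) * (j:ℚ)^l := by
        refine Finset.sum_congr rfl fun j hj => ?_
        have hchoose : (d:ℚ) * (d-1).choose j = d.choose (j+1) * (j+1) := by
          have h2 := Nat.add_one_mul_choose_eq (d-1) j
          rw [hd'] at h2
          exact_mod_cast congrArg (Nat.cast : ℕ → ℚ) h2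
        have hbin : ((j:ℚ)+1)^(k-1) = ∑ l ∈ range k, (j:ℚ)^l * ((k-1).choose l) := by
          have := add_pow (j:ℚ) 1 (k-1)
          rw [hk'] at this
          simpa using this
        have : ((j:ℚ)+1)^k = ((j:ℚ)+1) * ((j:ℚ)+1)^(k-1) := by
          rw [← pow_succ', hk']
        rw [this, hbin, Finset.mul_sum, Finset.mul_sum]
        refine Finset.sum_congr rfl fun l hl => ?_
        have : (-1:ℚ)^(j+1) * ↑(d.choose (j+1)) * (((j:ℚ)+1) * ((j:ℚ)^l * ((k-1).choose l)))
            = (-1:ℚ)^(j+1) * ((d.choose (j+1) : ℚ) * ((j:ℚ)+1)) * ((k-1).choose l) * (j:ℚ)^l := by ring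
        rw [this, ← hchoose]
        ring
    _ = -(d:ℚ) * ∑ l ∈ Finset.range k, ((k-1).choose l : ℚ) * Ssum (d-1) l := by
        rw [Finset.sum_comm, Finset.mul_sum]
        refine Finset.sum_congr rfl fun l hl => ?_
        rw [Ssum, hd', Finset.mul_sum, Finset.mul_sum]
        refine Finset.sum_congr rfl fun j hj => ?_
        ring

lemma Ssum_eq_zero : ∀ d k : ℕ, k < d → Ssum d k = 0 := by
  intro d
  induction d with
  | zero => intro k hk; omega
  | succ d ih =>
    intro k hk
    rcases Nat.eq_zero_or_pos k with rfl | hk1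
    · exact Ssum_zero _ (by omega)
    · rw [Ssum_rec _ _ (by omega) hk1]
      have : ∑ l ∈ Finset.range k, ((k-1).choose l : ℚ) * Ssum (d+1-1) l = 0 := by
        refine Finset.sum_eq_zero fun l hl => ?_
        rw [show d + 1 - 1 = d by omega, ih l (by simp at hl; omega)]
        ring
      rw [this]; ring

lemma Ssum_diag : ∀ d : ℕ, Ssum d d = (-1:ℚ)^d * d.factorial := by
  intro d
  induction d with
  | zero => simp [Ssum]
  | succ d ih =>
    rw [Ssum_rec _ _ (by omega) (by omega)]
    have : ∑ l ∈ Finset.range (d+1), ((d+1-1).choose l : ℚ) * Ssum (d+1-1) l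
        = ∑ l ∈ Finset.range (d+1), (if l = d then (-1:ℚ)^d * d.factorial else 0) := by
      refine Finset.sum_congr rfl fun l hl => ?_
      simp only [Nat.add_sub_cancel]
      rcases eq_or_ne l d with rfl | hne
      · rw [ih]; simp
      · rw [Ssum_eq_zero d l (by simp at hl; omega), if_neg hne]; ring
    rw [this, Finset.sum_ite_eq' _ d]
    simp [Nat.factorial_succ]
    ring

lemma key_lemma {R : Type*} [CommRing R] [Algebra ℚ R] (d : ℕ) (hd : 1 ≤ d) (w : ℚ) (A B : R) :
    ∑ i ∈ Finset.range (d+1), ((-1:ℚ)^i * d.choose i * ((i:ℚ) - w)) • (B + (i:ℚ) • A)^(d-1)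
      = ((-1:ℚ)^d * d.factorial) • A^(d-1) := by
  have hd' : d - 1 + 1 = d := by omega
  have step1 : ∀ i : ℕ, (B + (i:ℚ) • A)^(d-1)
      = ∑ k ∈ range d, ((i:ℚ)^k) • (A^k * B^(d-1-k) * ((d-1).choose k : ℚ) • (1:R)) := by
    intro i
    have := add_pow ((i:ℚ) • A) B (d-1)
    rw [hd'] at this
    rw [add_comm B, this]
    refine Finset.sum_congr rfl fun k hk => ?_
    rw [smul_pow]
    rw [smul_mul_assoc, smul_mul_assoc]
    congr 1
    rw [mul_smul_comm, mul_one]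
    ring_nf
    rw [Nat.cast_smul_eq_nsmul, nsmul_eq_mul]
    ring
  calc ∑ i ∈ Finset.range (d+1), ((-1:ℚ)^i * d.choose i * ((i:ℚ) - w)) • (B + (i:ℚ) • A)^(d-1)
      = ∑ k ∈ range d, (Ssum d (k+1) - w * Ssum d k) • (A^k * B^(d-1-k) * ((d-1).choose k : ℚ) • (1:R)) := by
        have expand : ∀ i : ℕ, ((-1:ℚ)^i * d.choose i * ((i:ℚ) - w)) • (B + (i:ℚ) • A)^(d-1)
            = ∑ k ∈ range d, (((-1:ℚ)^i * d.choose i * ((i:ℚ) - w)) * (i:ℚ)^k)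
                • (A^k * B^(d-1-k) * ((d-1).choose k : ℚ) • (1:R)) := by
          intro i
          rw [step1 i, Finset.smul_sum]
          exact Finset.sum_congr rfl fun k hk => by rw [smul_smul]
        simp only [expand]
        rw [Finset.sum_comm]
        refine Finset.sum_congr rfl fun k hk => ?_
        rw [← Finset.sum_smul]
        congr 1
        rw [Ssum, Ssum, Finset.mul_sum, ← Finset.sum_sub_distrib]
        refine Finset.sum_congr rfl fun i hi => ?_
        ring
    _ = ((-1:ℚ)^d * d.factorial) • A^(d-1) := by
        rw [Finset.sum_eq_single (d-1)]
        · rw [Ssum_eq_zero d (d-1) (by omega), hd', Ssum_diag d]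
          simp [Nat.sub_self]
        · intro k hk hne
          have hk' : k < d - 1 := by simp at hk; omega
          rw [Ssum_eq_zero d (k+1) (by omega), Ssum_eq_zero d k (by omega)]
          simp
        · intro h
          exact absurd (Finset.mem_range.mpr (by omega)) h

/-! Auxiliary definitions for the proof. -/

noncomputable def PP (m : ℤ) (d : ℕ) (i j : ℕ) : TensAlg :=
  (((2*m + i + j : ℤ) : TensAlg) * X 0 - X 1)^(d-1)

noncomputable def DD (d : ℕ) (i j : ℕ) : ℚ :=
  (-1:ℚ)^(i+j) * ((i:ℚ) - (j:ℚ)) * (d.choose i) * (d.choose j)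

noncomputable def cc (d : ℕ) (i j : ℕ) : ℚ :=
  (-1:ℚ)^(j-i) * ((i:ℚ) - (j:ℚ)) * (d.choose i) * (d.choose j)

lemma PP_symm (m : ℤ) (d : ℕ) (i j : ℕ) : PP m d j i = PP m d i j := by
  unfold PP
  rw [show (2*m + (j:ℤ) + i) = 2*m + i + j by ring]

lemma scalar_combine (d i j : ℕ) :
    (if i < j then cc d i j else 0) - (if j < i then cc d j i else 0) = DD d i j := by
  rcases lt_trichotomy i j with h | rfl | h
  · rw [if_pos h, if_neg (by omega), sub_zero, cc, DD]
    have hp : (-1:ℚ)^(j-i) = (-1:ℚ)^(i+j) := by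
      rw [show i + j = (j - i) + 2*i by omega, pow_add, pow_mul]
      norm_num
    rw [hp]
  · simp [cc, DD]
  · rw [if_neg (by omega), if_pos h, zero_sub, cc, DD]
    have hp : (-1:ℚ)^(i-j) = (-1:ℚ)^(i+j) := by
      rw [show i + j = (i - j) + 2*j by omega, pow_add, pow_mul]
      norm_num
    rw [hp]
    ring

lemma ell_mul (a b : ℤ) : ell a * ell b = ell (a+b) := by
  unfold ell
  rw [MonoidAlgebra.single_mul_single, one_mul]
  rfl

lemma Lc_mul (a b : ℤ) : Lc a * Lc b = Lc (a+b) := by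
  unfold Lc
  rw [← map_mul, ell_mul]

lemma Lc_pow (j : ℕ) : (Lc 1)^j = Lc j := by
  induction j with
  | zero =>
    simp [Lc, ell]
    rfl
  | succ j ih =>
    rw [pow_succ, ih, Lc_mul]
    norm_num

lemma step3 (m : ℤ) (d : ℕ) :
    ∑ j ∈ range (d+1), ((-1:ℚ)^j * (d.choose j : ℚ)) • Lc (m+j) = (1 - Lc 1)^d * Lc m := by
  have h : (1 - Lc 1 : TensAlg)^d = (-(Lc 1) + 1)^d := by ring_nf
  rw [h, add_pow, Finset.sum_mul]
  refine (Finset.sum_congr rfl fun j hj => ?_).symm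
  have hL : (-(Lc 1))^j = (-1:TensAlg)^j * Lc j := by rw [show (-(Lc 1) : TensAlg) = (-1 : TensAlg) * Lc 1 by ring, mul_pow, Lc_pow]
  rw [hL, one_pow, Algebra.smul_def]
  simp only [map_mul, map_pow, map_neg, map_one, map_natCast]
  rw [show m + (j:ℤ) = (j:ℤ) + m by ring, ← Lc_mul]
  ring

/-- `f_{m,d} = (-1)^d d! (1 - α^∨)^d ℓ_m ⊗ x^{d-1}`; in particular `f_{m,d}` is
annihilated by `∂/∂t`. -/
theorem stmt_6 (m : ℤ) (d : ℕ) (hd : 1 ≤ d) :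
    fmd m d = ((-1 : ℚ) ^ d * (d.factorial : ℚ)) •
        ((1 - Lc 1) ^ d * Lc m * (X 0 : TensAlg) ^ (d - 1)) ∧
      MvPolynomial.pderiv (1 : Fin 2) (fmd m d) = 0 := by
  have main : fmd m d = ((-1 : ℚ) ^ d * (d.factorial : ℚ)) •
      ((1 - Lc 1) ^ d * Lc m * (X 0 : TensAlg) ^ (d - 1)) := by
    -- Step 1: reindex to range (d+1) and symmetrize
    have step1 : fmd m d = ∑ i ∈ range (d+1), ∑ j ∈ range (d+1),
        DD d i j • (Lc (m+j) * PP m d i j) := by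
      have reindex : fmd m d = ∑ i ∈ range (d+1), ∑ j ∈ range (d+1),
          (if i < j then cc d i j • ((Lc (m+j) - Lc (m+i)) * PP m d i j) else 0) := by
        rw [fmd]
        refine Finset.sum_nbij' (fun a => (a - m).toNat) (fun i => m + i) ?_ ?_ ?_ ?_ ?_
        · intro a ha; simp only [Finset.mem_Icc] at ha; simp only [Finset.mem_range]; omega
        · intro i hi; simp only [Finset.mem_range] at hi; simp only [Finset.mem_Icc]; omega
        · intro a ha; simp only [Finset.mem_Icc] at ha; omega
        · intro i hi; simp only [Finset.mem_range] at hi; omega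
        · intro a ha
          simp only [Finset.mem_Icc] at ha
          refine Finset.sum_nbij' (fun b => (b - m).toNat) (fun j => m + j) ?_ ?_ ?_ ?_ ?_
          · intro b hb; simp only [Finset.mem_Icc] at hb; simp only [Finset.mem_range]; omega
          · intro j hj; simp only [Finset.mem_range] at hj; simp only [Finset.mem_Icc]; omega
          · intro b hb; simp only [Finset.mem_Icc] at hb; omega
          · intro j hj; simp only [Finset.mem_range] at hj; omega
          · intro b hb
            simp only [Finset.mem_Icc] at hb
            rw [show m + ↑(a - m).toNat = a by omega, show m + ↑(b - m).toNat = b by omega]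
            have hca : ((a - m).toNat : ℚ) = (a:ℚ) - (m:ℚ) := by
              have hi : (((a - m).toNat : ℤ) : ℚ) = ((a - m : ℤ) : ℚ) := by
                congr 1; omega
              push_cast at hi
              linarith
            have hcb : ((b - m).toNat : ℚ) = (b:ℚ) - (m:ℚ) := by
              have hi : (((b - m).toNat : ℤ) : ℚ) = ((b - m : ℤ) : ℚ) := by
                congr 1; omega
              push_cast at hi
              linarith
            by_cases hab : a < b
            · rw [if_pos hab, if_pos (by omega)]
              have hscal : (-1:ℚ)^((b - a).toNat) * ((a:ℚ) - (b:ℚ)) *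
                  (d.choose (a - m).toNat : ℚ) * (d.choose (b - m).toNat : ℚ)
                  = cc d (a - m).toNat (b - m).toNat := by
                rw [cc, show (b - m).toNat - (a - m).toNat = (b - a).toNat by omega,
                  hca, hcb]
                ring
              have hPP : (((a + b : ℤ) : TensAlg) * X 0 - X 1) ^ (d - 1)
                  = PP m d (a - m).toNat (b - m).toNat := by
                rw [PP, show (2*m + ((a - m).toNat : ℤ) + ((b - m).toNat : ℤ)) = a + b by omega]
              rw [hscal, hPP]
            · have hba : b ≤ a := not_lt.mp hab
              rw [if_neg hab, if_neg (by omega)]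
      rw [reindex]
      have split : ∀ i ∈ range (d+1), ∀ j ∈ range (d+1),
          (if i < j then cc d i j • ((Lc (m+j) - Lc (m+i)) * PP m d i j) else 0)
          = (if i < j then cc d i j else 0) • (Lc (m+j) * PP m d i j)
            - (if i < j then cc d i j else 0) • (Lc (m+i) * PP m d i j) := by
        intro i _ j _
        split <;> simp [sub_mul, smul_sub]
      rw [Finset.sum_congr rfl fun i hi => Finset.sum_congr rfl fun j hj => split i hi j hj]
      simp only [Finset.sum_sub_distrib]
      have swap : ∑ i ∈ range (d+1), ∑ j ∈ range (d+1),
          (if i < j then cc d i j else 0) • (Lc (m+i) * PP m d i j)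
          = ∑ i ∈ range (d+1), ∑ j ∈ range (d+1),
          (if j < i then cc d j i else 0) • (Lc (m+j) * PP m d i j) := by
        rw [Finset.sum_comm]
        exact Finset.sum_congr rfl fun i _ => Finset.sum_congr rfl fun j _ => by
          rw [PP_symm]
      rw [swap, ← Finset.sum_sub_distrib]
      refine Finset.sum_congr rfl fun i _ => ?_
      rw [← Finset.sum_sub_distrib]
      refine Finset.sum_congr rfl fun j _ => ?_
      rw [← sub_smul, scalar_combine]
    -- Step 2: evaluate inner sums via the key lemma
    rw [step1]
    have inner : ∀ j ∈ range (d+1),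
        ∑ i ∈ range (d+1), DD d i j • (Lc (m+j) * PP m d i j)
        = ((-1:ℚ)^j * (d.choose j : ℚ)) •
            (Lc (m+j) * (((-1:ℚ)^d * (d.factorial:ℚ)) • (X 0 : TensAlg)^(d-1))) := by
      intro j _
      have hrw : ∀ i : ℕ, DD d i j • (Lc (m+j) * PP m d i j)
          = ((-1:ℚ)^j * (d.choose j : ℚ)) •
              (Lc (m+j) * (((-1:ℚ)^i * (d.choose i:ℚ) * ((i:ℚ) - (j:ℚ))) • PP m d i j)) := by
        intro i
        rw [DD, show ((-1:ℚ)^(i+j) * ((i:ℚ) - (j:ℚ)) * (d.choose i : ℚ) * (d.choose j : ℚ))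
            = ((-1:ℚ)^j * (d.choose j : ℚ)) * ((-1:ℚ)^i * (d.choose i : ℚ) * ((i:ℚ) - (j:ℚ)))
            by rw [pow_add]; ring]
        rw [mul_smul]
        congr 1
        exact (mul_smul_comm _ _ _).symm
      simp only [hrw]
      rw [← Finset.smul_sum, ← Finset.mul_sum]
      congr 2
      have hPP : ∀ i : ℕ, PP m d i j
          = ((((2*m + j : ℤ) : TensAlg) * X 0 - X 1) + (i:ℚ) • (X 0 : TensAlg))^(d-1) := by
        intro i
        rw [PP]
        congr 1
        rw [Nat.cast_smul_eq_nsmul, nsmul_eq_mul]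
        push_cast
        ring
      simp only [hPP]
      exact key_lemma d hd (j:ℚ) (X 0) _
    rw [Finset.sum_comm, Finset.sum_congr rfl inner]
    -- Step 3: sum over j
    have pull : ∀ j : ℕ, ((-1:ℚ)^j * (d.choose j : ℚ)) •
        (Lc (m+j) * (((-1:ℚ)^d * (d.factorial:ℚ)) • (X 0 : TensAlg)^(d-1)))
        = ((-1:ℚ)^d * (d.factorial:ℚ)) •
            ((((-1:ℚ)^j * (d.choose j : ℚ)) • Lc (m+j)) * (X 0 : TensAlg)^(d-1)) := by
      intro j
      rw [mul_smul_comm, smul_smul, smul_mul_assoc, smul_smul]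
      congr 1
      ring
    simp only [pull]
    rw [← Finset.smul_sum, ← Finset.sum_mul, step3]
  exact ⟨main, by
    rw [main]
    rw [show (1 - Lc 1)^d * Lc m = MvPolynomial.C ((1 - ell 1)^d * ell m) by
      rw [Lc, Lc, map_mul, map_pow, map_sub, map_one]]
    rw [← algebraMap_smul (A := GrpAlg) ((-1:ℚ)^d * (d.factorial:ℚ))
      (MvPolynomial.C ((1 - ell 1)^d * ell m) * X 0 ^ (d-1)), Derivation.map_smul]
    rw [pderiv_C_mul, pderiv_pow, pderiv_X_of_ne (by decide)]
    simp⟩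
end

section
/- Fix v ≥ 1 and let J_v ⊆ ℚ[Λ] ⊗ ℚ[x,t] be the ℚ-span of the elements f_{m,d} for m ∈ ℤ and 1 ≤ d ≤ v. Then J_v equals the sum over d = 1,...,v of (1 − α^∨)^d ℚ[Λ] ⊗ ℚ[x]{∂_x^d}, where ℚ[x]{∂_x^d} denotes the polynomials of degree ≤ d−1. -/
section AltSum
open Polynomial Finset


lemma altsum {R : Type*} [CommRing R] : ∀ (d : ℕ) (p : R[X]), p.natDegree ≤ d →
    ∑ a ∈ Finset.range (d+1), (-1:R)^a * (d.choose a : R) * p.eval (a:R)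
      = (-1:R)^d * (d.factorial : R) * p.coeff d := by
  intro d
  induction d with
  | zero =>
    intro p hp
    rw [Polynomial.eq_C_of_natDegree_le_zero hp]
    simp
  | succ d ih =>
    intro p hp
    set q : R[X] := taylor 1 p - p with hq
    have hqc : ∀ k, d ≤ k → q.coeff k = ((k+1).choose k : R) * p.coeff (k+1) := by
      intro k hk
      have h1 : (taylor (1:R) p).coeff k = (hasseDeriv k p).eval 1 :=
        taylor_coeff (r := (1:R)) (f := p) k
      have hd1 : (hasseDeriv k p).natDegree ≤ 1 := by
        refine (natDegree_hasseDeriv_le p k).trans ?_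
        omega
      have h2 := eq_X_add_C_of_natDegree_le_one hd1
      have h3 : (hasseDeriv k p).coeff 1 = ((k+1).choose k : R) * p.coeff (k+1) := by
        simpa [add_comm] using hasseDeriv_coeff (f := p) (k := k) 1
      have h4 : (hasseDeriv k p).coeff 0 = p.coeff k := by
        simpa using hasseDeriv_coeff (f := p) (k := k) 0
      have h5 : q.coeff k = (hasseDeriv k p).eval 1 - p.coeff k := by
        simp [hq, h1]
      rw [h5, h2]; simp [h3, h4]
    have hq1 : q.natDegree ≤ d := by
      rw [natDegree_le_iff_coeff_eq_zero]
      intro N hN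
      rcases Nat.lt_or_ge N (d+2) with h | h
      · have hN1 : N = d + 1 := by omega
        rw [hqc N (by omega), hN1]
        have : p.coeff (d+1+1) = 0 := coeff_eq_zero_of_natDegree_lt (by omega)
        simp [this]
      · have hqd : q.natDegree ≤ d + 1 := by
          have h6 := natDegree_taylor p (1:R)
          have h5 : (taylor (1:R) p - p).natDegree ≤ max (taylor (1:R) p).natDegree p.natDegree :=
            natDegree_sub_le _ _
          rw [hq]; omega
        exact coeff_eq_zero_of_natDegree_lt (by omega)
    have hq2 : q.coeff d = ((d:R)+1) * p.coeff (d+1) := by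
      rw [hqc d le_rfl, Nat.choose_succ_self_right]
      push_cast; ring
    have heval : ∀ a : ℕ, q.eval (a:R) = p.eval ((a:R)+1) - p.eval (a:R) := by
      intro a
      simp [hq, taylor_apply, eval_comp]
    have key : ∑ a ∈ Finset.range (d+2), (-1:R)^a * ((d+1).choose a : R) * p.eval (a:R)
        = - ∑ a ∈ Finset.range (d+1), (-1:R)^a * (d.choose a : R) * q.eval (a:R) := by
      have hrhs : - ∑ a ∈ Finset.range (d+1), (-1:R)^a * (d.choose a : R) * q.eval (a:R)
          = (∑ a ∈ Finset.range (d+1), (-1:R)^(a+1) * (d.choose a : R) * p.eval ((a:R)+1))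
            + ∑ a ∈ Finset.range (d+1), (-1:R)^a * (d.choose a : R) * p.eval (a:R) := by
        rw [← Finset.sum_add_distrib, ← Finset.sum_neg_distrib]
        refine Finset.sum_congr rfl fun a _ => ?_
        rw [heval a]; ring
      have hlhs : ∑ a ∈ Finset.range (d+2), (-1:R)^a * ((d+1).choose a : R) * p.eval (a:R)
          = (∑ i ∈ Finset.range (d+1), (-1:R)^(i+1) * ((d.choose i : R) + (d.choose (i+1) : R)) * p.eval (((i:ℕ):R)+1))
            + p.eval 0 := by
        rw [Finset.sum_range_succ' (fun a => (-1:R)^a * ((d+1).choose a : R) * p.eval (a:R)) (d+1)]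
        simp only [Nat.choose_succ_succ]
        push_cast
        norm_num
      have hT2 : ∑ a ∈ Finset.range (d+1), (-1:R)^a * (d.choose a : R) * p.eval (a:R)
          = (∑ i ∈ Finset.range (d+1), (-1:R)^(i+1) * (d.choose (i+1) : R) * p.eval (((i:ℕ):R)+1))
            + p.eval 0 := by
        rw [Finset.sum_range_succ (fun i => (-1:R)^(i+1) * (d.choose (i+1) : R) * p.eval (((i:ℕ):R)+1)) d]
        rw [Finset.sum_range_succ' (fun a => (-1:R)^a * (d.choose a : R) * p.eval (a:R)) d]
        simp [Nat.choose_succ_self]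
      rw [hrhs, hlhs, hT2]
      have hsplit : ∑ i ∈ Finset.range (d+1), (-1:R)^(i+1) * ((d.choose i : R) + (d.choose (i+1) : R)) * p.eval (((i:ℕ):R)+1)
          = (∑ i ∈ Finset.range (d+1), (-1:R)^(i+1) * (d.choose i : R) * p.eval (((i:ℕ):R)+1))
            + ∑ i ∈ Finset.range (d+1), (-1:R)^(i+1) * (d.choose (i+1) : R) * p.eval (((i:ℕ):R)+1) := by
        rw [← Finset.sum_add_distrib]
        exact Finset.sum_congr rfl fun i _ => by ring
      rw [hsplit]
      ring
    rw [key, ih q hq1, hq2]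
    rw [Nat.factorial_succ]
    push_cast
    ring

lemma linpow_coeff {R : Type*} [CommRing R] (y z : R) : ∀ n : ℕ,
    ((C y * X + C z)^n).coeff n = y^n ∧ ((C y * X + C z)^n).natDegree ≤ n := by
  intro n
  constructor
  · induction n with
    | zero => simp
    | succ n ihc =>
      have hdeg : ((C y * X + C z)^n).natDegree ≤ n :=
        (natDegree_pow_le).trans (by
          have := natDegree_linear_le (a := y) (b := z); nlinarith)
      rw [pow_succ, mul_add, coeff_add]
      have h1 : ((C y * X + C z)^n * (C y * X)).coeff (n+1) = y^(n+1) := by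
        rw [show (C y * X + C z)^n * (C y * X) = C y * ((C y * X + C z)^n * X) by ring,
          coeff_C_mul, coeff_mul_X, ihc, pow_succ]
        ring
      have h2 : ((C y * X + C z)^n * C z).coeff (n+1) = 0 := by
        rw [mul_comm, coeff_C_mul, coeff_eq_zero_of_natDegree_lt (by omega)]
        ring
      rw [h1, h2, add_zero]
  · exact (natDegree_pow_le).trans (by
      have := natDegree_linear_le (a := y) (b := z); nlinarith)

lemma keyB {R : Type*} [CommRing R] (d : ℕ) (hd : 1 ≤ d) (b y z : R) :
    ∑ a ∈ Finset.range (d+1), (-1:R)^a * (d.choose a : R) * (((a:R)) - b) * ((a:R)*y + z)^(d-1)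
      = (-1:R)^d * (d.factorial : R) * y^(d-1) := by
  obtain ⟨n, rfl⟩ : ∃ n, d = n+1 := ⟨d-1, by omega⟩
  simp only [Nat.add_sub_cancel]
  set p : R[X] := (X - C b) * (C y * X + C z)^n with hp
  have heval : ∀ a : ℕ, p.eval (a:R) = ((a:R) - b) * ((a:R)*y + z)^n := by
    intro a
    rw [hp]
    simp only [eval_mul, eval_sub, eval_X, eval_C, eval_pow, eval_add]
    ring_nf
  have hdeg : p.natDegree ≤ n+1 := by
    refine (natDegree_mul_le).trans ?_
    have h1 : (X - C b).natDegree ≤ 1 := natDegree_X_sub_C_le b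
    have h2 := (linpow_coeff y z n).2
    omega
  have hcoeff : p.coeff (n+1) = y^n := by
    rw [hp, sub_mul, coeff_sub]
    have h1 : (X * (C y * X + C z)^n).coeff (n+1) = y^n := by
      rw [coeff_X_mul, (linpow_coeff y z n).1]
    have h2 : (C b * (C y * X + C z)^n).coeff (n+1) = 0 := by
      rw [coeff_C_mul, coeff_eq_zero_of_natDegree_lt (lt_of_le_of_lt (linpow_coeff y z n).2 (by omega))]
      ring
    rw [h1, h2, sub_zero]
  have := altsum (n+1) p hdeg
  rw [hcoeff] at this
  rw [← this]
  exact Finset.sum_congr rfl fun a _ => by rw [heval a]; ring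

end AltSum



open MvPolynomial

lemma ell_add (a b : ℤ) : ell (a+b) = ell a * ell b := by
  simp [ell, MonoidAlgebra.single_mul_single]

lemma Lc_add (a b : ℤ) : Lc (a+b) = Lc a * Lc b := by
  simp [Lc, ell_add, map_mul]

lemma Lc_zero : Lc 0 = 1 := by
  have : ell 0 = 1 := by
    simp [ell]
    rfl
  simp [Lc, this]

lemma Lc_nat_pow (j : ℕ) : Lc (j : ℤ) = (Lc 1)^j := by
  induction j with
  | zero => simpa using Lc_zero
  | succ j ih =>
    push_cast
    rw [Lc_add, ih, pow_succ]

lemma expandpow (k : ℕ) (m : ℤ) :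
    (1 - Lc 1)^k * Lc m = ∑ j ∈ Finset.range (k+1), ((-1:ℚ)^j * (k.choose j : ℚ)) • Lc (m+j) := by
  rw [sub_eq_add_neg, add_comm, add_pow, Finset.sum_mul]
  refine Finset.sum_congr rfl fun j hj => ?_
  rw [Lc_add, Lc_nat_pow, Algebra.smul_def, map_mul, map_pow, map_neg, map_one, map_natCast]
  ring

lemma sum_Icc_int {M : Type*} [AddCommMonoid M] (m : ℤ) (d : ℕ) (g : ℤ → M) :
    ∑ a ∈ Finset.Icc m (m+(d:ℤ)), g a = ∑ i ∈ Finset.range (d+1), g (m+i) := by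
  have h : Finset.Icc m (m+(d:ℤ))
      = (Finset.range (d+1)).map (⟨fun i : ℕ => m + (i:ℤ), by intro a b hab; simpa using hab⟩ : ℕ ↪ ℤ) := by
    ext a
    simp only [Finset.mem_Icc, Finset.mem_map, Finset.mem_range, Function.Embedding.coeFn_mk]
    constructor
    · rintro ⟨h1, h2⟩
      exact ⟨(a - m).toNat, by omega, by change m + (((a - m).toNat : ℕ) : ℤ) = a; omega⟩
    · rintro ⟨i, hi, rfl⟩
      show m ≤ m + (i:ℤ) ∧ m + (i:ℤ) ≤ m + (d:ℤ)
      omega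
  rw [h, Finset.sum_map]
  rfl

lemma negpow (i j : ℕ) (h : i ≤ j) : (-1:ℚ)^(j-i) = (-1)^i * (-1)^j := by
  obtain ⟨k, rfl⟩ := Nat.exists_eq_add_of_le h
  rw [show i + k - i = k by omega, pow_add, ← mul_assoc, ← mul_pow]
  norm_num

noncomputable def Fm (m : ℤ) (n : ℕ) (i j : ℕ) : TensAlg :=
  ((-1:ℚ)^i * (-1:ℚ)^j * ((i:ℚ) - (j:ℚ)) * ((n+1).choose i : ℚ) * ((n+1).choose j : ℚ)) •
    ((Lc (m+j) - Lc (m+i)) * (((2*m + i + j : ℤ) : TensAlg) * X 0 - X 1) ^ n)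

lemma claimA (m : ℤ) (n : ℕ) :
    fmd m (n+1) = ∑ i ∈ Finset.range (n+2), ∑ j ∈ Finset.range (n+2),
      if i < j then Fm m n i j else 0 := by
  rw [fmd, show ((n+1:ℕ):ℤ) = ((n+1:ℕ):ℤ) from rfl]
  rw [sum_Icc_int m (n+1)]
  rw [show n+1+1 = n+2 from rfl]
  refine Finset.sum_congr rfl fun i hi => ?_
  rw [sum_Icc_int m (n+1)]
  refine Finset.sum_congr rfl fun j hj => ?_
  by_cases h : i < j
  · rw [if_pos (by exact_mod_cast by omega : (m+(i:ℤ)) < m+(j:ℤ)), if_pos h]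
    rw [Fm]
    congr 1
    · rw [show ((m+(j:ℤ)) - (m+(i:ℤ))).toNat = j - i by omega,
        show ((m+(i:ℤ)) - m).toNat = i by omega, show ((m+(j:ℤ)) - m).toNat = j by omega,
        negpow i j (le_of_lt h)]
      push_cast
      ring
    · rw [show (m+(i:ℤ)) + (m+(j:ℤ)) = 2*m + i + j by ring]
      rfl
  · rw [if_neg (by omega : ¬ ((m+(i:ℤ)) < m+(j:ℤ))), if_neg h]

lemma Fm_symm (m : ℤ) (n : ℕ) (i j : ℕ) : Fm m n j i = Fm m n i j := by
  rw [Fm, Fm]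
  rw [show (2*m + (j:ℤ) + i) = 2*m + i + j by ring]
  rw [show Lc (m+i) - Lc (m+j) = -(Lc (m+j) - Lc (m+i)) by ring]
  rw [show ((-1:ℚ)^j * (-1:ℚ)^i * ((j:ℚ) - (i:ℚ)) * ((n+1).choose j : ℚ) * ((n+1).choose i : ℚ))
      = -((-1:ℚ)^i * (-1:ℚ)^j * ((i:ℚ) - (j:ℚ)) * ((n+1).choose i : ℚ) * ((n+1).choose j : ℚ)) by ring]
  have key : ∀ (c : ℚ) (A B : TensAlg), (-c) • (-A * B) = c • (A*B) := by
    intro c A B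
    rw [Algebra.smul_def, Algebra.smul_def, map_neg]
    ring
  exact key _ _ _

lemma Fm_diag (m : ℤ) (n : ℕ) (i : ℕ) : Fm m n i i = 0 := by
  rw [Fm]
  rw [show ((-1:ℚ)^i * (-1:ℚ)^i * ((i:ℚ) - (i:ℚ)) * ((n+1).choose i : ℚ) * ((n+1).choose i : ℚ)) = 0 by ring]
  rw [zero_smul]

lemma claimC (m : ℤ) (n : ℕ) :
    ∑ i ∈ Finset.range (n+2), ∑ j ∈ Finset.range (n+2), Fm m n i j
      = fmd m (n+1) + fmd m (n+1) := by
  rw [claimA]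
  have hsplit : ∀ i ∈ Finset.range (n+2), ∀ j ∈ Finset.range (n+2),
      Fm m n i j = (if i < j then Fm m n i j else 0) + (if j < i then Fm m n i j else 0) := by
    intro i _ j _
    rcases lt_trichotomy i j with h | h | h
    · rw [if_pos h, if_neg (by omega), add_zero]
    · rw [if_neg (by omega), if_neg (by omega), h, Fm_diag, add_zero]
    · rw [if_neg (by omega), if_pos h, zero_add]
  calc ∑ i ∈ Finset.range (n+2), ∑ j ∈ Finset.range (n+2), Fm m n i j
      = ∑ i ∈ Finset.range (n+2), ∑ j ∈ Finset.range (n+2),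
          ((if i < j then Fm m n i j else 0) + (if j < i then Fm m n i j else 0)) := by
        refine Finset.sum_congr rfl fun i hi => Finset.sum_congr rfl fun j hj => hsplit i hi j hj
    _ = (∑ i ∈ Finset.range (n+2), ∑ j ∈ Finset.range (n+2), if i < j then Fm m n i j else 0)
        + ∑ i ∈ Finset.range (n+2), ∑ j ∈ Finset.range (n+2), if j < i then Fm m n i j else 0 := by
        rw [← Finset.sum_add_distrib]
        exact Finset.sum_congr rfl fun i _ => by rw [← Finset.sum_add_distrib]
    _ = _ := by
        congr 1
        rw [Finset.sum_comm]
        exact Finset.sum_congr rfl fun i _ => Finset.sum_congr rfl fun j _ => by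
          rw [Fm_symm]


noncomputable def Gm (m : ℤ) (n : ℕ) (i j : ℕ) : TensAlg :=
  ((-1:ℚ)^i * (-1:ℚ)^j * ((i:ℚ) - (j:ℚ)) * ((n+1).choose i : ℚ) * ((n+1).choose j : ℚ)) •
    (Lc (m+j) * (((2*m + i + j : ℤ) : TensAlg) * X 0 - X 1) ^ n)

lemma Fm_split (m : ℤ) (n : ℕ) (i j : ℕ) :
    Fm m n i j = Gm m n i j + Gm m n j i := by
  rw [Fm, Gm, Gm, show (2*m + (j:ℤ) + i) = 2*m + i + j by ring,
    show ((-1:ℚ)^j * (-1:ℚ)^i * ((j:ℚ) - (i:ℚ)) * ((n+1).choose j : ℚ) * ((n+1).choose i : ℚ))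
      = -((-1:ℚ)^i * (-1:ℚ)^j * ((i:ℚ) - (j:ℚ)) * ((n+1).choose i : ℚ) * ((n+1).choose j : ℚ)) by ring,
    neg_smul, ← sub_eq_add_neg, ← smul_sub]
  congr 1
  rw [sub_mul]

lemma sumG (m : ℤ) (n : ℕ) :
    ∑ i ∈ Finset.range (n+2), ∑ j ∈ Finset.range (n+2), Fm m n i j
      = (∑ i ∈ Finset.range (n+2), ∑ j ∈ Finset.range (n+2), Gm m n i j)
        + ∑ i ∈ Finset.range (n+2), ∑ j ∈ Finset.range (n+2), Gm m n i j := by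
  have h1 : ∑ i ∈ Finset.range (n+2), ∑ j ∈ Finset.range (n+2), Gm m n j i
      = ∑ i ∈ Finset.range (n+2), ∑ j ∈ Finset.range (n+2), Gm m n i j :=
    Finset.sum_comm
  calc ∑ i ∈ Finset.range (n+2), ∑ j ∈ Finset.range (n+2), Fm m n i j
      = (∑ i ∈ Finset.range (n+2), ∑ j ∈ Finset.range (n+2), Gm m n i j)
        + ∑ i ∈ Finset.range (n+2), ∑ j ∈ Finset.range (n+2), Gm m n j i := by
        rw [← Finset.sum_add_distrib]
        refine Finset.sum_congr rfl fun i _ => ?_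
        rw [← Finset.sum_add_distrib]
        exact Finset.sum_congr rfl fun j _ => Fm_split m n i j
    _ = _ := by rw [h1]

lemma innerG (m : ℤ) (n : ℕ) (j : ℕ) :
    ∑ i ∈ Finset.range (n+2), (((-1:ℚ)^i * (((n+1).choose i : ℕ) : ℚ) * ((i:ℚ) - (j:ℚ))) •
        (((((2*m + i + j : ℤ) : TensAlg)) * X 0 - X 1) ^ n))
      = ((-1:ℚ)^(n+1) * (((n+1).factorial : ℕ) : ℚ)) • (X 0:TensAlg)^n := by
  have hk := keyB (R := TensAlg) (n+1) (by omega) ((j : ℕ) : TensAlg) (X 0)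
      ((((2*m:ℤ)) : TensAlg) * X 0 + ((j:ℕ) : TensAlg) * X 0 - X 1)
  simp only [Nat.add_sub_cancel] at hk
  have hL : ∑ i ∈ Finset.range (n+2), (((-1:ℚ)^i * (((n+1).choose i : ℕ) : ℚ) * ((i:ℚ) - (j:ℚ))) •
        (((((2*m + i + j : ℤ) : TensAlg)) * X 0 - X 1) ^ n))
      = ∑ a ∈ Finset.range (n+1+1), (-1:TensAlg)^a * (((n+1).choose a : ℕ) : TensAlg) *
          (((a:ℕ) : TensAlg) - ((j:ℕ) : TensAlg)) *
          (((a:ℕ) : TensAlg) * X 0 + ((((2*m:ℤ)) : TensAlg) * X 0 + ((j:ℕ) : TensAlg) * X 0 - X 1))^n := by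
    refine Finset.sum_congr rfl fun i _ => ?_
    rw [Algebra.smul_def, map_mul, map_mul, map_pow, map_neg, map_one, map_natCast, map_sub,
      map_natCast, map_natCast]
    push_cast
    ring
  rw [hL, hk, Algebra.smul_def, map_mul, map_pow, map_neg, map_one, map_natCast]

lemma claimGm (m : ℤ) (n : ℕ) :
    ∑ i ∈ Finset.range (n+2), ∑ j ∈ Finset.range (n+2), Gm m n i j
      = ((-1:ℚ)^(n+1) * (((n+1).factorial : ℕ) : ℚ)) •
          ((1 - Lc 1)^(n+1) * Lc m * (X 0:TensAlg)^n) := by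
  rw [Finset.sum_comm]
  have hcol : ∀ j ∈ Finset.range (n+2), ∑ i ∈ Finset.range (n+2), Gm m n i j
      = ((-1:ℚ)^j * (((n+1).choose j : ℕ) : ℚ)) •
          (Lc (m+j) * (((-1:ℚ)^(n+1) * (((n+1).factorial : ℕ) : ℚ)) • (X 0:TensAlg)^n)) := by
    intro j _
    have h1 : ∀ i, Gm m n i j
        = ((-1:ℚ)^j * (((n+1).choose j : ℕ) : ℚ)) •
            (Lc (m+j) * ((((-1:ℚ)^i * (((n+1).choose i : ℕ) : ℚ) * ((i:ℚ) - (j:ℚ)))) •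
              (((((2*m + i + j : ℤ) : TensAlg)) * X 0 - X 1) ^ n))) := by
      intro i
      rw [Gm]
      simp only [Algebra.smul_def, map_mul, map_sub, map_pow, map_neg, map_one, map_natCast]
      ring
    rw [Finset.sum_congr rfl fun i _ => h1 i, ← Finset.smul_sum, ← Finset.mul_sum, innerG]
  rw [Finset.sum_congr rfl hcol]
  have h2 : (1 - Lc 1)^(n+1) * Lc m * (X 0:TensAlg)^n
      = ∑ j ∈ Finset.range (n+2), ((-1:ℚ)^j * (((n+1).choose j : ℕ) : ℚ)) • (Lc (m+j) * (X 0:TensAlg)^n) := by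
    rw [show (1 - Lc 1)^(n+1) * Lc m * (X 0:TensAlg)^n
        = ((1 - Lc 1)^(n+1) * Lc m) * (X 0:TensAlg)^n from rfl, expandpow (n+1) m,
      Finset.sum_mul]
    exact Finset.sum_congr rfl fun j _ => smul_mul_assoc _ _ _
  rw [h2, Finset.smul_sum]
  refine Finset.sum_congr rfl fun j _ => ?_
  rw [smul_comm]
  rw [mul_smul_comm]

lemma main_id (m : ℤ) (n : ℕ) :
    fmd m (n+1) = ((-1:ℚ)^(n+1) * (((n+1).factorial : ℕ) : ℚ)) •
      ((1 - Lc 1)^(n+1) * Lc m * (X 0:TensAlg)^n) := by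
  have h1 := claimC m n
  have h2 := sumG m n
  have h3 := claimGm m n
  rw [h2, h3] at h1
  have h4 : ∀ x y : TensAlg, x + x = y + y → y = x := by
    intro x y h
    have h5 : (2⁻¹:ℚ) • (x + x) = (2⁻¹:ℚ) • (y + y) := by rw [h]
    rw [← two_smul ℚ x, ← two_smul ℚ y, smul_smul, smul_smul] at h5
    norm_num at h5
    exact h5.symm
  exact h4 _ _ h1

/-- For `v ≥ 1`, the span `J_v` of the elements `f_{m,d}` (`m ∈ ℤ`, `1 ≤ d ≤ v`) equals
`∑_{d=1}^{v} (1-α^∨)^d ℚ[Λ] ⊗ ℚ[x]{∂_x^d}`, i.e. the span of the elements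
`(1-α^∨)^d ℓ_m ⊗ x^e` with `1 ≤ d ≤ v`, `m ∈ ℤ` and `e ≤ d-1`. -/
theorem stmt_7 (v : ℕ) (hv : 1 ≤ v) :
    Submodule.span ℚ {p : TensAlg | ∃ m : ℤ, ∃ d : ℕ, 1 ≤ d ∧ d ≤ v ∧ p = fmd m d} =
      Submodule.span ℚ {p : TensAlg | ∃ d : ℕ, 1 ≤ d ∧ d ≤ v ∧ ∃ m : ℤ, ∃ e : ℕ,
        e ≤ d - 1 ∧ p = (1 - Lc 1) ^ d * Lc m * (X 0 : TensAlg) ^ e} := by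
  have hc : ∀ n : ℕ, ((-1:ℚ)^(n+1) * (((n+1).factorial : ℕ) : ℚ)) ≠ 0 := fun n =>
    mul_ne_zero (pow_ne_zero _ (by norm_num)) (Nat.cast_ne_zero.mpr (Nat.factorial_ne_zero _))
  have hgen : ∀ (m : ℤ) (n : ℕ),
      (1 - Lc 1)^(n+1) * Lc m * (X 0:TensAlg)^n
        = ((-1:ℚ)^(n+1) * (((n+1).factorial : ℕ) : ℚ))⁻¹ • fmd m (n+1) := by
    intro m n
    rw [main_id, smul_smul, inv_mul_cancel₀ (hc n), one_smul]
  apply le_antisymm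
  · rw [Submodule.span_le]
    rintro p ⟨m, d, hd1, hdv, rfl⟩
    obtain ⟨n, rfl⟩ : ∃ n, d = n + 1 := ⟨d - 1, by omega⟩
    rw [main_id]
    exact Submodule.smul_mem _ _
      (Submodule.subset_span ⟨n+1, by omega, hdv, m, n, by omega, rfl⟩)
  · rw [Submodule.span_le]
    rintro p ⟨d, hd1, hdv, m, e, he, rfl⟩
    have hed : e + 1 ≤ d := by omega
    have hsplit : (1 - Lc 1)^d * Lc m * (X 0:TensAlg)^e
        = ∑ j ∈ Finset.range ((d - (e+1))+1), ((-1:ℚ)^j * (((d - (e+1)).choose j : ℕ) : ℚ)) •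
            ((1 - Lc 1)^(e+1) * Lc (m+j) * (X 0:TensAlg)^e) := by
      have hpow : (1 - Lc 1)^d = (1 - Lc 1)^(e+1) * (1 - Lc 1)^(d-(e+1)) := by
        rw [← pow_add]
        congr 1
        omega
      rw [hpow,
        show (1 - Lc 1)^(e+1) * (1 - Lc 1)^(d-(e+1)) * Lc m * (X 0:TensAlg)^e
          = (1 - Lc 1)^(e+1) * ((1 - Lc 1)^(d-(e+1)) * Lc m) * (X 0:TensAlg)^e by ring,
        expandpow (d-(e+1)) m, Finset.mul_sum, Finset.sum_mul]
      refine Finset.sum_congr rfl fun j _ => ?_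
      simp only [Algebra.smul_def]
      ring
    rw [hsplit]
    refine Submodule.sum_mem _ fun j _ => Submodule.smul_mem _ _ ?_
    rw [hgen (m+j) e]
    exact Submodule.smul_mem _ _
      (Submodule.subset_span ⟨m+j, e+1, by omega, by omega, rfl⟩)
end

section
/- Fix integers d, h, v ≥ 1 with v ≤ h and v < d, and fix m ∈ ℤ. Let g = ∑ (ℓ_b − ℓ_a) ⊗ G_{ab} ((a+b)x − t)^{d−1}, where the sum runs over pairs m ≤ a < b ≤ m+h with b − a ≤ v and G_{ab} ∈ ℚ. If ∂g/∂t = 0, then g = 0. -/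
open MvPolynomial

/-! ### Auxiliary lemmas -/

/-- Vandermonde-type vanishing: if the first `|S|` moments of `f` (w.r.t. injective nodes `x`)
vanish, then `f` vanishes on `S`. -/
lemma vand (S : Finset ℤ) (x : ℤ → ℚ) (hx : Set.InjOn x S) (f : ℤ → ℚ)
    (h : ∀ n < S.card, ∑ b ∈ S, f b * x b ^ n = 0) : ∀ b ∈ S, f b = 0 := by
  intro b hb
  set p := Lagrange.basis S x b with hp
  have hdeg : p.natDegree < S.card := by
    rw [hp, Lagrange.natDegree_basis hx hb]
    exact Nat.sub_lt (Finset.card_pos.mpr ⟨b, hb⟩) one_pos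
  have heval : ∀ b' : ℤ, p.eval (x b') = ∑ n ∈ Finset.range S.card, p.coeff n * x b' ^ n :=
    fun b' => Polynomial.eval_eq_sum_range' hdeg (x b')
  have h1 : ∑ b' ∈ S, f b' * p.eval (x b') = f b := by
    rw [Finset.sum_eq_single b]
    · rw [hp, Lagrange.eval_basis_self hx hb, mul_one]
    · intro b' hb' hne
      rw [hp, Lagrange.eval_basis_of_ne hne.symm hb', mul_zero]
    · intro hbb; exact absurd hb hbb
  have h2 : ∑ b' ∈ S, f b' * p.eval (x b') = 0 := by
    calc ∑ b' ∈ S, f b' * p.eval (x b')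
        = ∑ b' ∈ S, ∑ n ∈ Finset.range S.card, p.coeff n * (f b' * x b' ^ n) := by
          refine Finset.sum_congr rfl fun b' _ => ?_
          rw [heval b', Finset.mul_sum]
          exact Finset.sum_congr rfl fun n _ => by ring
      _ = ∑ n ∈ Finset.range S.card, p.coeff n * ∑ b' ∈ S, f b' * x b' ^ n := by
          rw [Finset.sum_comm]
          exact Finset.sum_congr rfl fun n _ => by rw [Finset.mul_sum]
      _ = 0 := by
          refine Finset.sum_eq_zero fun n hn => ?_
          rw [h n (Finset.mem_range.mp hn), mul_zero]
  rw [← h1, h2]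

lemma pderiv_q (s : GrpAlg) : pderiv (1 : Fin 2) (C s * X 0 - X 1) = -1 := by
  simp [pderiv_X]

lemma iter_pderiv_pow (s : GrpAlg) (N r : ℕ) (hr : r ≤ N) :
    (pderiv (1 : Fin 2))^[r] ((C s * X 0 - X 1) ^ N)
      = ((-1 : ℚ) ^ r * (N.descFactorial r : ℚ)) • (C s * X 0 - X 1) ^ (N - r) := by
  induction r with
  | zero => simp
  | succ r ih =>
    rw [Function.iterate_succ_apply', ih (le_of_lt (Nat.lt_of_succ_le hr))]
    rw [Derivation.map_smul_of_tower, (pderiv (1 : Fin 2)).leibniz_pow, pderiv_q,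
      Nat.descFactorial_succ]
    have h1 : N - r - 1 = N - (r + 1) := by omega
    have h2 : (C s * X 0 - X 1) ^ (N - (r + 1)) * (-1 : TensAlg)
        = -((C s * X 0 - X 1) ^ (N - (r + 1))) := by ring
    rw [h1, smul_eq_mul, h2, smul_neg, smul_neg, ← Nat.cast_smul_eq_nsmul ℚ, smul_smul,
      ← neg_smul]
    congr 1
    push_cast
    ring

lemma iter_pderiv_C_mul (c : GrpAlg) (p : TensAlg) (r : ℕ) :
    (pderiv (1 : Fin 2))^[r] (C c * p) = C c * (pderiv (1 : Fin 2))^[r] p := by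
  induction r generalizing p with
  | zero => rfl
  | succ r ih =>
    rw [Function.iterate_succ_apply, Function.iterate_succ_apply, pderiv_C_mul, ih]

lemma iter_pderiv_sum {ι : Type*} (s : Finset ι) (F : ι → TensAlg) (r : ℕ) :
    (pderiv (1 : Fin 2))^[r] (∑ i ∈ s, F i) = ∑ i ∈ s, (pderiv (1 : Fin 2))^[r] (F i) := by
  induction r generalizing F with
  | zero => rfl
  | succ r ih =>
    rw [Function.iterate_succ_apply, map_sum]
    exact ih _

lemma C_qsmul (x : ℚ) (e : GrpAlg) : (C (x • e) : TensAlg) = x • C e := by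
  have hx : (algebraMap ℚ TensAlg x) = C (algebraMap ℚ GrpAlg x) := by
    rw [IsScalarTower.algebraMap_apply ℚ GrpAlg TensAlg, algebraMap_eq]
  rw [Algebra.smul_def, Algebra.smul_def, map_mul, hx]

lemma term_smul_eq (K u : ℚ) (e : GrpAlg) (p : TensAlg) :
    C (u • e) * (K • p) = C ((K * u) • e) * p := by
  rw [C_qsmul, C_qsmul, smul_mul_assoc, smul_mul_assoc, mul_smul_comm, smul_smul,
    mul_comm u K]

/-- Evaluation of a group algebra element at a group element, as a `ℚ`-linear map. -/
noncomputable def phi (c : ℤ) : GrpAlg →ₗ[ℚ] ℚ where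
  toFun y := y.coeff (Multiplicative.ofAdd c)
  map_add' _ _ := rfl
  map_smul' _ _ := rfl

lemma phi_ell (b c : ℤ) : phi c (ell b) = if b = c then 1 else 0 := by
  rw [ell]
  show (MonoidAlgebra.single (Multiplicative.ofAdd b) (1 : ℚ)).coeff (Multiplicative.ofAdd c) = _
  rw [MonoidAlgebra.coeff_single, Finsupp.single_apply]
  simp

lemma psi_phi (cpt : ℤ) (u : ℚ) (a b : ℤ) (n : ℕ) :
    phi cpt ((aeval ![(1 : GrpAlg), 0])
        (C (u • (ell b - ell a)) * (C ((a + b : ℤ) : GrpAlg) * X 0 - X 1) ^ n))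
      = u * ((a + b : ℤ) : ℚ) ^ n *
          ((if b = cpt then (1 : ℚ) else 0) - (if a = cpt then 1 else 0)) := by
  have hQ : (aeval ![(1 : GrpAlg), 0]) ((C ((a + b : ℤ) : GrpAlg) * X 0 - X 1) ^ n)
      = ((a + b : ℤ) : GrpAlg) ^ n := by
    rw [map_pow, map_sub, map_mul, aeval_X, aeval_X, aeval_C]
    simp
  have hC : (aeval ![(1 : GrpAlg), 0]) (C (u • (ell b - ell a))) = u • (ell b - ell a) := by
    rw [aeval_C]
    simp [Algebra.algebraMap_self]
  rw [map_mul, hC, hQ]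
  have hs : ((a + b : ℤ) : GrpAlg) = algebraMap ℚ GrpAlg ((a + b : ℤ) : ℚ) := by
    rw [map_intCast]
  rw [hs, ← map_pow, mul_comm, ← Algebra.smul_def, map_smul, map_smul, map_sub, phi_ell, phi_ell]
  simp only [smul_eq_mul]
  ring

/-- Vanishing lemma: if `1 ≤ v ≤ h`, `v < d`, and
`g = ∑_{m ≤ a < b ≤ m+h, b-a ≤ v} G_{ab} (ℓ_b - ℓ_a) ⊗ ((a+b)x - t)^{d-1}`
satisfies `∂g/∂t = 0`, then `g = 0`. -/
theorem stmt_8 (d h v : ℕ) (m : ℤ) (hv : 1 ≤ v) (hvh : v ≤ h) (hvd : v < d)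
    (G : ℤ → ℤ → ℚ) (g : TensAlg)
    (hg : g = ∑ a ∈ Finset.Icc m (m + h), ∑ b ∈ Finset.Icc m (m + h),
      if a < b ∧ b - a ≤ (v : ℤ) then
        G a b • ((Lc b - Lc a) * (((a + b : ℤ) : TensAlg) * X 0 - X 1) ^ (d - 1))
      else 0)
    (h0 : MvPolynomial.pderiv (1 : Fin 2) g = 0) : g = 0 := by
  classical
  set A := Finset.Icc m (m + h) with hA
  set N := d - 1 with hNdef
  have hN1 : 1 ≤ N := by omega
  have hvN : v ≤ N := by omega
  -- Rewrite `g` in a normalized form.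
  have hg' : g = ∑ a ∈ A, ∑ b ∈ A,
      if a < b ∧ b - a ≤ (v : ℤ) then
        C (G a b • (ell b - ell a)) * (C ((a + b : ℤ) : GrpAlg) * X (0 : Fin 2) - X 1) ^ N
      else 0 := by
    rw [hg]
    refine Finset.sum_congr rfl fun a _ => Finset.sum_congr rfl fun b _ => ?_
    split_ifs with hc
    · rw [show ((a + b : ℤ) : TensAlg) = C ((a + b : ℤ) : GrpAlg) from
        (map_intCast (C : GrpAlg →+* TensAlg) (a + b)).symm]
      rw [show Lc b - Lc a = C (ell b - ell a) from (map_sub (C : GrpAlg →+* TensAlg) _ _).symm]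
      rw [C_qsmul, smul_mul_assoc]
    · rfl
  -- Iterated `t`-derivatives of `g` vanish and are computed explicitly.
  have hDr : ∀ r : ℕ, 1 ≤ r → r ≤ N →
      (∑ a ∈ A, ∑ b ∈ A,
        if a < b ∧ b - a ≤ (v : ℤ) then
          C ((((-1 : ℚ) ^ r * (N.descFactorial r : ℚ)) * G a b) • (ell b - ell a)) *
            (C ((a + b : ℤ) : GrpAlg) * X (0 : Fin 2) - X 1) ^ (N - r)
        else 0) = 0 := by
    intro r hr1 hrN
    have hz : (⇑(pderiv (1 : Fin 2)))^[r] g = 0 := by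
      obtain ⟨k, rfl⟩ : ∃ k, r = k + 1 := ⟨r - 1, by omega⟩
      rw [Function.iterate_succ_apply, h0]
      exact Function.iterate_fixed (map_zero _) k
    rw [hg'] at hz
    simp only [iter_pderiv_sum] at hz
    refine Eq.trans (Finset.sum_congr rfl fun a _ => Finset.sum_congr rfl fun b _ => ?_) hz
    rw [apply_ite ((⇑(pderiv (1 : Fin 2)))^[r]), Function.iterate_fixed (map_zero _) r]
    split_ifs with hc
    · rw [iter_pderiv_C_mul, iter_pderiv_pow _ N r hrN, term_smul_eq]
    · rfl
  -- Scalar relations obtained by applying `phi c ∘ aeval ![1,0]`.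
  have hrel : ∀ n : ℕ, n < N → ∀ c : ℤ,
      (∑ a ∈ A, ∑ b ∈ A,
        if a < b ∧ b - a ≤ (v : ℤ) then
          (((-1 : ℚ) ^ (N - n) * (N.descFactorial (N - n) : ℚ)) * G a b) *
            ((a + b : ℤ) : ℚ) ^ n *
            ((if b = c then (1 : ℚ) else 0) - (if a = c then 1 else 0))
        else 0) = 0 := by
    intro n hn c
    have h1 := hDr (N - n) (by omega) (by omega)
    rw [show N - (N - n) = n from by omega] at h1
    have h2 := congrArg (⇑(phi c) ∘ ⇑(aeval ![(1 : GrpAlg), 0] : TensAlg →ₐ[GrpAlg] GrpAlg)) h1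
    simp only [Function.comp_apply, map_sum, map_zero] at h2
    refine Eq.trans (Finset.sum_congr rfl fun a _ => Finset.sum_congr rfl fun b _ => ?_) h2
    by_cases hcnd : a < b ∧ b - a ≤ (v : ℤ)
    · rw [if_pos hcnd, if_pos hcnd, psi_phi]
    · rw [if_neg hcnd, if_neg hcnd, map_zero, map_zero]
  -- The key induction: all coefficients `G c b` with `c < b`, `b - c ≤ v` vanish.
  have hKne : ∀ n : ℕ, n < N → ((-1 : ℚ) ^ (N - n) * (N.descFactorial (N - n) : ℚ)) ≠ 0 := by
    intro n hn
    apply mul_ne_zero (pow_ne_zero _ (by norm_num))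
    have : N.descFactorial (N - n) ≠ 0 := by
      rw [Ne, Nat.descFactorial_eq_zero_iff_lt]
      omega
    exact_mod_cast Nat.cast_ne_zero.mpr this
  have hpull : ∀ (P : Prop) [Decidable P] (f : ℤ → ℚ),
      (∑ b ∈ A, if P then f b else 0) = if P then ∑ b ∈ A, f b else 0 := by
    intro P _ f
    split_ifs <;> simp
  have main : ∀ k : ℕ, ∀ c : ℤ, c ∈ A → (c - m).toNat = k →
      ∀ b ∈ A, c < b → b - c ≤ (v : ℤ) → G c b = 0 := by
    intro k
    induction k using Nat.strong_induction_on with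
    | _ k IH =>
    intro c hc hck
    have hcm : m ≤ c ∧ c ≤ m + h := Finset.mem_Icc.mp hc
    -- reduce the relation at `c` to a single sum over `b`
    have hrc : ∀ n : ℕ, n < N →
        (∑ b ∈ A, if c < b ∧ b - c ≤ (v : ℤ) then G c b * ((c + b : ℤ) : ℚ) ^ n else 0) = 0 := by
      intro n hn
      set K : ℚ := (-1 : ℚ) ^ (N - n) * (N.descFactorial (N - n) : ℚ) with hK
      have h3 := hrel n hn c
      have hsplit : ∀ a b : ℤ,
          (if a < b ∧ b - a ≤ (v : ℤ) then
            (K * G a b) * ((a + b : ℤ) : ℚ) ^ n *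
              ((if b = c then (1 : ℚ) else 0) - (if a = c then 1 else 0))
          else 0)
          = (if b = c then (if a < b ∧ b - a ≤ (v : ℤ) then
                (K * G a b) * ((a + b : ℤ) : ℚ) ^ n else 0) else 0)
            - (if a = c then (if a < b ∧ b - a ≤ (v : ℤ) then
                (K * G a b) * ((a + b : ℤ) : ℚ) ^ n else 0) else 0) := by
        intro a b
        split_ifs <;> ring
      simp only [← hK, hsplit, Finset.sum_sub_distrib] at h3
      have hT1 : (∑ a ∈ A, ∑ b ∈ A, if b = c then
            (if a < b ∧ b - a ≤ (v : ℤ) then (K * G a b) * ((a + b : ℤ) : ℚ) ^ n else 0) else 0)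
          = ∑ a ∈ A, (if a < c ∧ c - a ≤ (v : ℤ) then (K * G a c) * ((a + c : ℤ) : ℚ) ^ n else 0) := by
        refine Finset.sum_congr rfl fun a _ => ?_
        rw [Finset.sum_ite_eq' A c
          (fun b => if a < b ∧ b - a ≤ (v : ℤ) then (K * G a b) * ((a + b : ℤ) : ℚ) ^ n else 0),
          if_pos hc]
      have hT2 : (∑ a ∈ A, ∑ b ∈ A, if a = c then
            (if a < b ∧ b - a ≤ (v : ℤ) then (K * G a b) * ((a + b : ℤ) : ℚ) ^ n else 0) else 0)
          = ∑ b ∈ A, (if c < b ∧ b - c ≤ (v : ℤ) then (K * G c b) * ((c + b : ℤ) : ℚ) ^ n else 0) := by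
        have := Finset.sum_ite_eq' A c
          (fun a => ∑ b ∈ A, if a < b ∧ b - a ≤ (v : ℤ) then (K * G a b) * ((a + b : ℤ) : ℚ) ^ n else 0)
        rw [if_pos hc] at this
        rw [← this]
        refine Finset.sum_congr rfl fun a _ => ?_
        rw [hpull]
      rw [hT1, hT2] at h3
      -- first sum vanishes by the induction hypothesis
      have hZ1 : (∑ a ∈ A, (if a < c ∧ c - a ≤ (v : ℤ) then
          (K * G a c) * ((a + c : ℤ) : ℚ) ^ n else 0)) = 0 := by
        refine Finset.sum_eq_zero fun a ha => ?_
        split_ifs with hac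
        · have ham : m ≤ a ∧ a ≤ m + h := Finset.mem_Icc.mp ha
          have := IH (a - m).toNat (by omega) a ha rfl c hc hac.1 hac.2
          rw [this, mul_zero, zero_mul]
        · rfl
      rw [hZ1, zero_sub, neg_eq_zero] at h3
      -- divide by `K`
      have h4 : (∑ b ∈ A, if c < b ∧ b - c ≤ (v : ℤ) then
          (K * G c b) * ((c + b : ℤ) : ℚ) ^ n else 0)
          = K * ∑ b ∈ A, (if c < b ∧ b - c ≤ (v : ℤ) then G c b * ((c + b : ℤ) : ℚ) ^ n else 0) := by
        rw [Finset.mul_sum]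
        refine Finset.sum_congr rfl fun b _ => ?_
        split_ifs
        · ring
        · rw [mul_zero]
      rw [h4] at h3
      exact (mul_eq_zero.mp h3).resolve_left (hKne n hn)
    -- apply the Vandermonde lemma
    set S := A.filter (fun b => c < b ∧ b - c ≤ (v : ℤ)) with hS
    have hScard : S.card ≤ v := by
      have hsub : S ⊆ Finset.Icc (c + 1) (c + v) := by
        intro b hb
        have := Finset.mem_filter.mp hb
        have := Finset.mem_Icc.mp this.1
        rw [Finset.mem_Icc]
        omega
      calc S.card ≤ (Finset.Icc (c + 1) (c + v)).card := Finset.card_le_card hsub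
        _ = v := by rw [Int.card_Icc]; omega
    have hinj : Set.InjOn (fun b => ((c + b : ℤ) : ℚ)) S := by
      intro b1 _ b2 _ e
      dsimp only at e
      have : (c + b1 : ℤ) = (c + b2 : ℤ) := by exact_mod_cast e
      omega
    have hvd0 := vand S (fun b => ((c + b : ℤ) : ℚ)) hinj (fun b => G c b) (fun n hn => by
      have hnN : n < N := lt_of_lt_of_le hn (le_trans hScard hvN)
      have := hrc n hnN
      rw [← Finset.sum_filter] at this
      exact this)
    intro b hb hcb hbv
    exact hvd0 b (Finset.mem_filter.mpr ⟨hb, hcb, hbv⟩)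
  -- conclude
  rw [hg]
  refine Finset.sum_eq_zero fun a ha => Finset.sum_eq_zero fun b hb => ?_
  split_ifs with hcond
  · rw [main (a - m).toNat a ha rfl b hb hcond.1 hcond.2, zero_smul]
  · rfl
end
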